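/- arXiv:1002.0467 — 2 statements merged into one kernel-verified Lean document; each statement's English description precedes it below -/
import Mathlib

section
/- Let $N = 2m+1$ be a positive odd integer and let $c \in \mathbb{Z}/N\mathbb{Z}$. The number of multisets of size $4$ of elements of $\mathbb{Z}/N\mathbb{Z}$ whose sum is $c$ equals $(m+1)(m+2)(2m+3)/6$, independently of $c$. -/
/-!
Translating every element of a multiset of size `k` by `t` shifts its sum by `k • t`. When `k` is
prime to `|G|`, multiplication by `k` is onto, so all fibres of the sum map on `Sym G k` have the
same size, namely `C(|G| + k - 1, k) / |G|`. For `G = ℤ/(2m+1)` and `k = 4` this quotient is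
`(m+1)(m+2)(2m+3)/6`.
-/

open Finset

namespace Sym

variable {G : Type*} [AddCommGroup G] {k : ℕ}

theorem sum_map_add_right (s : Sym G k) (t : G) :
    ((s.map (· + t) : Sym G k) : Multiset G).sum = (s : Multiset G).sum + k • t := by
  rw [coe_map, Multiset.sum_map_add, Multiset.map_id', Multiset.map_const', Multiset.sum_replicate,
    card_coe]

variable [Fintype G] [DecidableEq G]

theorem card_filter_sum_eq_of_coprime (hk : (Fintype.card G).Coprime k) (c d : G) :
    #{s : Sym G k | (s : Multiset G).sum = c} = #{s : Sym G k | (s : Multiset G).sum = d} := by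
  rw [← Nat.card_eq_fintype_card] at hk
  obtain ⟨t, ht⟩ := hk.nsmul_right_bijective.surjective (d - c)
  refine card_equiv (equivCongr (Equiv.addRight t)) fun s => ?_
  have hsum : ((equivCongr (Equiv.addRight t) s : Sym G k) : Multiset G).sum
      = (s : Multiset G).sum + (d - c) := by
    rw [← ht]; exact sum_map_add_right s t
  simp only [mem_filter, mem_univ, true_and, hsum]
  rw [← eq_sub_iff_add_eq, sub_sub_cancel]

theorem card_mul_card_filter_sum_eq_choose (hk : (Fintype.card G).Coprime k) (c : G) :
    Fintype.card G * #{s : Sym G k | (s : Multiset G).sum = c}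
      = (Fintype.card G + k - 1).choose k := by
  rw [← card_sym_eq_choose, ← card_univ (α := Sym G k),
    card_eq_sum_card_fiberwise (s := univ) (t := univ)
      (f := fun s : Sym G k => (s : Multiset G).sum) (by simp),
    sum_congr rfl fun d _ => card_filter_sum_eq_of_coprime hk d c, sum_const, card_univ,
    smul_eq_mul]

end Sym

theorem Nat.eq_div_six_of_mul_eq_choose {m x : ℕ} (h : (2 * m + 1) * x = (2 * m + 4).choose 4) :
    x = (m + 1) * (m + 2) * (2 * m + 3) / 6 := by
  have h24 : 24 * (2 * m + 4).choose 4 = (2 * m + 4) * (2 * m + 3) * (2 * m + 2) * (2 * m + 1) := by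
    rw [show 24 = Nat.factorial 4 from rfl, ← Nat.descFactorial_eq_factorial_mul_choose]
    simp only [Nat.descFactorial_succ, Nat.reduceSubDiff, Nat.add_one_sub_one, tsub_zero,
      Nat.descFactorial_zero, mul_one]
    ring
  have h6 : 6 * x = (m + 1) * (m + 2) * (2 * m + 3) := by
    apply Nat.eq_of_mul_eq_mul_left (show 0 < 4 * (2 * m + 1) by omega)
    linear_combination 24 * h + h24
  omega

theorem stmt_4 (m : ℕ) (c : ZMod (2 * m + 1)) :
    (Finset.univ.filter
        fun s : Sym (ZMod (2 * m + 1)) 4 => (s : Multiset (ZMod (2 * m + 1))).sum = c).card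
      = (m + 1) * (m + 2) * (2 * m + 3) / 6 := by
  have hodd : (Fintype.card (ZMod (2 * m + 1))).Coprime 4 := by
    rw [ZMod.card]
    exact Nat.Coprime.pow_right 2 (odd_two_mul_add_one m).coprime_two_right
  apply Nat.eq_div_six_of_mul_eq_choose
  simpa [ZMod.card] using Sym.card_mul_card_filter_sum_eq_choose hodd c
end

section
/- Let $p$ be a prime and $A \in M_n(\mathbb{Z}_p)$ with $\det A \neq 0$. If $B \in M_n(\mathbb{Z}_p)$ satisfies $B \equiv A \pmod{p^m}$ for some integer $m > v_p(\det A)$, then $\det B \neq 0$ and $BA^{-1} \in GL_n(\mathbb{Z}_p)$, i.e. $BA^{-1}$ and its inverse both have entries in $\mathbb{Z}_p$. -/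
/-!
Write `B = A + p^m C`. Since `v_p(det A) < m`, we have `p^m = det A · t` with `p ∣ t`, and
`A · adj A = det A` gives `B = (1 + t C adj A) A`. The factor `1 + t C adj A` is congruent to `1`
modulo the maximal ideal, so its determinant is a unit.
-/

open IsLocalRing

namespace Matrix

variable {ι R : Type*} [Fintype ι] [DecidableEq ι] [CommRing R]

theorem add_smul_eq_one_add_smul_mul_adjugate_mul {A C : Matrix ι ι R} {t d : R}
    (hd : A.det * t = d) : A + d • C = (1 + t • (C * A.adjugate)) * A := by
  rw [Matrix.add_mul, Matrix.one_mul, Matrix.smul_mul, Matrix.mul_assoc, Matrix.adjugate_mul,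
    Matrix.mul_smul, Matrix.mul_one, smul_smul, mul_comm t, hd]

theorem isUnit_det_one_add_smul [IsLocalRing R] {t : R} (ht : t ∈ maximalIdeal R)
    (M : Matrix ι ι R) : IsUnit (1 + t • M).det := by
  have hres : (1 + t • M).map (residue R) = 1 := by
    ext i j
    simp [one_apply, (residue_eq_zero_iff t).mpr ht]
  rw [← residue_ne_zero_iff_isUnit, RingHom.map_det, RingHom.mapMatrix_apply, hres, det_one]
  exact one_ne_zero

theorem exists_isUnit_det_add_smul_eq_mul [IsLocalRing R] {A : Matrix ι ι R} {t d : R}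
    (hd : A.det * t = d) (ht : t ∈ maximalIdeal R) (C : Matrix ι ι R) :
    ∃ U : Matrix ι ι R, IsUnit U.det ∧ A + d • C = U * A :=
  ⟨_, isUnit_det_one_add_smul ht _, add_smul_eq_one_add_smul_mul_adjugate_mul hd⟩

end Matrix

namespace PadicInt

variable {p : ℕ} [Fact p.Prime]

theorem dvd_p_pow_of_valuation_le {x : ℤ_[p]} (hx : x ≠ 0) {k : ℕ} (hk : x.valuation ≤ k) :
    x ∣ (p : ℤ_[p]) ^ k := by
  have hx_dvd : x ∣ (p : ℤ_[p]) ^ x.valuation := by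
    conv_lhs => rw [unitCoeff_spec hx]
    exact (unitCoeff hx).isUnit.mul_left_dvd.mpr dvd_rfl
  exact hx_dvd.trans (pow_dvd_pow _ hk)

end PadicInt

/-- If `A ∈ M_n(ℤ_p)` has nonzero determinant and `B ≡ A (mod p^m)` with
`m > v_p(det A)`, then `det B ≠ 0` and `B A⁻¹ ∈ GL_n(ℤ_p)`, i.e. `B = U A` for some
matrix `U` over `ℤ_p` whose determinant is a `p`-adic unit. -/
theorem stmt_11 (p : ℕ) [Fact p.Prime] (n : ℕ) (A B : Matrix (Fin n) (Fin n) ℤ_[p])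
    (hA : A.det ≠ 0) (m : ℕ) (hm : (A.det).valuation < (m : ℤ))
    (hB : ∀ i j, (p : ℤ_[p]) ^ m ∣ (B i j - A i j)) :
    B.det ≠ 0 ∧ ∃ U : Matrix (Fin n) (Fin n) ℤ_[p], IsUnit U.det ∧ B = U * A := by
  choose C hC using hB
  have hBC : B = A + ((p : ℤ_[p]) ^ m) • Matrix.of C := by
    ext i j
    simp only [Matrix.add_apply, Matrix.smul_apply, Matrix.of_apply, smul_eq_mul, ← hC]
    ring
  obtain ⟨m', rfl⟩ : ∃ m', m = m' + 1 := Nat.exists_eq_add_one.mpr (by omega)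
  obtain ⟨s, hs⟩ := PadicInt.dvd_p_pow_of_valuation_le hA (k := m') (by omega)
  have hd : A.det * (s * p) = (p : ℤ_[p]) ^ (m' + 1) := by rw [pow_succ, hs, mul_assoc]
  obtain ⟨U, hU, hBU⟩ := Matrix.exists_isUnit_det_add_smul_eq_mul hd
    (Ideal.mul_mem_left _ s PadicInt.p_nonunit) (Matrix.of C)
  rw [← hBC] at hBU
  refine ⟨?_, U, hU, hBU⟩
  rw [hBU, Matrix.det_mul]
  exact mul_ne_zero hU.ne_zero hA
end
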